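/- arXiv:2505.07297 — 5 statements merged into one kernel-verified Lean document; each statement's English description precedes it below -/
import Mathlib

section
/- Let τ be a regular cardinal, let I be a set of cardinality < τ, and let (C_i)_{i∈I} be a family of locally small categories. An object X = (X_i)_{i∈I} of the product category ∏_{i∈I} C_i is τ-presentable if and only if X_i is a τ-presentable object of C_i for every i ∈ I. -/
/-!
Colimits in a product category are computed componentwise, even where they need not exist: in
`C × D` a cocone over the first components is completed by the second component of a colimit
cocone, and `∀ k, C k` splits as `C i × ∀ k ≠ i, C k`. Hence `Hom(X, -)` is the product of the
functors `Hom(X i, -(i))`, and a product of fewer than `τ` functors preserving `τ`-filtered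
colimits still preserves them, because `τ`-small limits commute with `τ`-filtered colimits of
types. Conversely, a `τ`-filtered diagram in `C i`, paired with the constant diagram at the other
components of `X`, has the componentwise colimit; factoring maps out of `X` through its stages
and projecting to the `i`-th component shows that `X i` is `τ`-presentable.
-/

universe w v u u'

open CategoryTheory Limits Opposite

/-- A small category `J` is `κ`-filtered if every diagram in it indexed by a category with
fewer than `κ` objects and fewer than `κ` arrows admits a cocone. -/
def IsCardFiltered (J : Type w) [SmallCategory J] (κ : Cardinal.{w}) : Prop :=
  ∀ (A : Type w) [SmallCategory A], ∀ (F : A ⥤ J),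
    Cardinal.mk A < κ → Cardinal.mk (Arrow A) < κ → Nonempty (Limits.Cocone F)

/-- An object `X` of a locally small category `C` is `κ`-presentable if the functor
`Hom(X, -) : C ⥤ Type` preserves colimits of (small) `κ`-filtered diagrams. -/
def IsCardPresentable {C : Type u} [Category.{v} C] (κ : Cardinal.{v}) (X : C) : Prop :=
  ∀ (J : Type v) [SmallCategory J], IsCardFiltered J κ →
    PreservesColimitsOfShape J (coyoneda.obj (op X))

lemma isCardFiltered_iff_isCardinalFiltered (J : Type w) [SmallCategory J] (κ : Cardinal.{w})
    [Fact κ.IsRegular] : IsCardFiltered J κ ↔ IsCardinalFiltered J κ := by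
  simp only [IsCardFiltered, ← hasCardinalLT_iff_cardinal_mk_lt]
  exact ⟨fun h ↦ ⟨fun F hA ↦ h _ F (hasCardinalLT_of_hasCardinalLT_arrow hA) hA⟩,
    fun h _ _ F _ hA ↦ h.nonempty_cocone F hA⟩

lemma isCardPresentable_iff_isCardinalPresentable {C : Type u} [Category.{v} C]
    (κ : Cardinal.{v}) [Fact κ.IsRegular] (X : C) :
    IsCardPresentable κ X ↔ IsCardinalPresentable X κ := by
  simp only [IsCardPresentable, isCardFiltered_iff_isCardinalFiltered]
  exact ⟨fun h ↦ ⟨fun J _ hJ ↦ h J hJ⟩, fun h J _ _ ↦ h.preservesColimitOfShape J⟩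

universe w' w₀ v₁ v₂ u₁ u₂

namespace CategoryTheory

section Prod

variable {J : Type*} [Category J] {C : Type u₁} {D : Type u₂} [Category.{v₁} C]
  [Category.{v₂} D] {F : J ⥤ C × D}

def Limits.isColimitOfIsColimitMapCoconeFstSnd {c : Cocone F}
    (h₁ : IsColimit ((Prod.fst C D).mapCocone c)) (h₂ : IsColimit ((Prod.snd C D).mapCocone c)) :
    IsColimit c where
  desc s := (h₁.desc ((Prod.fst C D).mapCocone s), h₂.desc ((Prod.snd C D).mapCocone s))
  fac _ j := Prod.ext (h₁.fac _ j) (h₂.fac _ j)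
  uniq s m hm := Prod.ext
    (h₁.uniq ((Prod.fst C D).mapCocone s) m.1 fun j ↦ congrArg _root_.Prod.fst (hm j))
    (h₂.uniq ((Prod.snd C D).mapCocone s) m.2 fun j ↦ congrArg _root_.Prod.snd (hm j))

def Limits.isColimitMapCoconeFst {c : Cocone F} (hc : IsColimit c) :
    IsColimit ((Prod.fst C D).mapCocone c) :=
  let lift (s : Cocone (F ⋙ Prod.fst C D)) : Cocone F :=
    { pt := (s.pt, c.pt.2)
      ι :=
        { app j := (s.ι.app j, (c.ι.app j).2)
          naturality _ _ f :=
            Prod.ext (s.ι.naturality f) (((Prod.snd C D).mapCocone c).ι.naturality f) } }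
  { desc s := (hc.desc (lift s)).1
    fac s j := congrArg _root_.Prod.fst (hc.fac (lift s) j)
    uniq s m hm := congrArg _root_.Prod.fst
      (hc.uniq (lift s) (m, 𝟙 _) fun j ↦ Prod.ext (hm j) (Category.comp_id _)) }

instance : PreservesColimitsOfSize.{w, w'} (Prod.fst C D) :=
  ⟨⟨⟨fun hc ↦ ⟨isColimitMapCoconeFst hc⟩⟩⟩⟩

lemma IsCardinalPresentable.fst (κ : Cardinal.{w}) [Fact κ.IsRegular] (P : C × D)
    [IsCardinalPresentable P κ] : IsCardinalPresentable P.1 κ where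
  preservesColimitOfShape J _ _ := ⟨fun {F} ↦ ⟨fun {c} hc ↦ ⟨by
    have := isFiltered_of_isCardinalFiltered J κ
    have := IsFiltered.isConnected J
    have hc' : IsColimit (((𝟭 C).prod' ((Functor.const C).obj P.2)).mapCocone c) :=
      isColimitOfIsColimitMapCoconeFstSnd hc (isColimitConstCocone J P.2)
    refine Types.FilteredColimit.isColimitOf' _ _ (fun (f : P.1 ⟶ c.pt) ↦ ?_)
      (fun j (f₁ f₂ : P.1 ⟶ F.obj j) hf ↦ ?_)
    · obtain ⟨j, g, hg⟩ := IsCardinalPresentable.exists_hom_of_isColimit κ hc'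
        ((f, 𝟙 P.2) : P ⟶ (c.pt, P.2))
      exact ⟨j, g.1, (congrArg _root_.Prod.fst hg).symm⟩
    · obtain ⟨k, u, hu⟩ := IsCardinalPresentable.exists_eq_of_isColimit' κ hc'
        ((f₁, 𝟙 P.2) : P ⟶ (F.obj j, P.2)) (f₂, 𝟙 P.2) (Prod.ext hf rfl)
      exact ⟨k, u, congrArg _root_.Prod.fst hu⟩⟩⟩⟩

end Prod

section Pi

variable {I : Type w₀} {C : I → Type u} [∀ i, Category.{v} (C i)]

noncomputable def Pi.equivalenceProd [DecidableEq I] (i : I) :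
    (∀ k, C k) ≌ C i × ∀ k : {k // k ≠ i}, C (Equiv.optionSubtypeNe i (some k)) :=
  (Pi.equivalenceOfEquiv C (Equiv.optionSubtypeNe i)).symm.trans (Pi.optionEquivalence _)

instance (i : I) : PreservesColimitsOfSize.{w, w'} (Pi.eval C i) := by
  classical
  exact preservesColimits_of_natIso
    (Iso.refl _ : (Pi.equivalenceProd i).functor ⋙ Prod.fst _ _ ≅ Pi.eval C i)

lemma IsCardinalPresentable.apply (κ : Cardinal.{w}) [Fact κ.IsRegular] {X : ∀ k, C k}
    [IsCardinalPresentable X κ] (i : I) : IsCardinalPresentable (X i) κ := by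
  classical
  have := isCardinalPresentable_of_equivalence X κ (Pi.equivalenceProd i)
  exact IsCardinalPresentable.fst κ ((Pi.equivalenceProd i).functor.obj X)

end Pi

section PiSmall

variable {I : Type v} {C : I → Type u} [∀ i, Category.{v} (C i)]

def coyonedaPiFan (X : ∀ k, C k) : Fan fun i ↦ Pi.eval C i ⋙ coyoneda.obj (op (X i)) :=
  Fan.mk (coyoneda.obj (op X)) fun i ↦ { app _ := ↾fun f ↦ f i }

def isLimitCoyonedaPiFan (X : ∀ k, C k) : IsLimit (coyonedaPiFan X) :=
  Fan.IsLimit.mk _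
    (fun s ↦
      { app Y := ↾fun x k ↦ (s.proj k).app Y x
        naturality _ _ f := by
          ext x
          funext k
          exact NatTrans.naturality_apply (s.proj k) f x })
    (uniq := fun s m hm ↦ by
      ext Y x
      funext k
      exact ConcreteCategory.congr_hom (NatTrans.congr_app (hm k) Y) x)

lemma isCardinalPresentable_pi (κ : Cardinal.{w}) [Fact κ.IsRegular] (hI : HasCardinalLT I κ)
    (X : ∀ k, C k) [∀ i, IsCardinalPresentable (X i) κ] : IsCardinalPresentable X κ :=
  have (i : Discrete I) :
      ((Discrete.functor fun i ↦ Pi.eval C i ⋙ coyoneda.obj (op (X i))).obj i).IsCardinalAccessible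
        κ := by
    dsimp
    infer_instance
  Functor.isCardinalAccessible_of_isLimit (coyonedaPiFan X) (isLimitCoyonedaPiFan X) κ
    ((hasCardinalLT_arrow_discrete_iff κ).2 hI)

end PiSmall

end CategoryTheory

/-- An object of a product category `∏ i, C i` indexed by a set of size `< τ` is
`τ`-presentable if and only if each of its components is `τ`-presentable. -/
theorem stmt0 (τ : Cardinal.{v}) (hτ : τ.IsRegular) (I : Type v)
    (hI : Cardinal.mk I < τ) (C : I → Type u) [∀ i, Category.{v} (C i)]
    (X : ∀ i, C i) :
    IsCardPresentable τ X ↔ ∀ i, IsCardPresentable τ (X i) := by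
  have : Fact τ.IsRegular := ⟨hτ⟩
  simp only [isCardPresentable_iff_isCardinalPresentable]
  exact ⟨fun _ i ↦ IsCardinalPresentable.apply τ i,
    fun _ ↦ isCardinalPresentable_pi τ ((hasCardinalLT_iff_cardinal_mk_lt I τ).2 hI) X⟩
end

section
/- Let C be a triangulated category with small coproducts that is compactly generated by a set E of compact objects (i.e. the smallest strictly full triangulated subcategory of C closed under small coproducts and containing E is C itself). Let D be a triangulated category with small coproducts and let L : C → D be an exact (triangulated) functor that preserves small coproducts (for instance, a functor admitting a right adjoint). Then L sends every compact object of C to a compact object of D if and only if L(e) is a compact object of D for every e ∈ E. -/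
/-!
A compact object `X` of `C` is a retract of an object built from `E` in finitely many steps
(zero, shifts, isomorphisms, extensions). Indeed, the class of objects `Y` such that every map from
a compact object to `Y` factors through such a finitely built object is triangulated and closed
under coproducts (using compactness of the source), so by compact generation it is everything;
apply this to `𝟙 X`. Compact objects form a triangulated subcategory closed under retracts
(the five lemma on the long exact `Hom`-sequences), so if `L` sends `E` to compact objects, it
sends the finitely built objects, and hence their retracts, to compact objects.
-/

universe v u u'

open CategoryTheory Limits Pretriangulated ZeroObject DirectSum

/-- An object `c` of a preadditive category with small coproducts is compact if for every
small family `(X j)` the canonical map `⨁ j, Hom(c, X j) → Hom(c, ∐ X)` is bijective. -/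
def IsCompactObj {C : Type u} [Category.{v} C] [Preadditive C] [HasCoproducts.{v} C]
    (c : C) : Prop :=
  ∀ (J : Type v) (X : J → C),
    letI := Classical.decEq J
    Function.Bijective
      (⇑(DirectSum.toAddMonoid (fun j => Preadditive.rightComp c (Sigma.ι X j)) :
        (⨁ j, (c ⟶ X j)) →+ (c ⟶ ∐ X)))

/-- A strictly full triangulated subcategory: a class of objects containing a zero object,
closed under isomorphisms, shifts, and extensions by distinguished triangles. -/
structure IsTriangSub (C : Type u) [Category.{v} C] [HasZeroObject C] [Preadditive C]
    [HasShift C ℤ] [∀ n : ℤ, (shiftFunctor C n).Additive] [Pretriangulated C]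
    (S : Set C) : Prop where
  zero_mem : (0 : C) ∈ S
  mem_of_iso : ∀ {X Y : C}, (X ≅ Y) → X ∈ S → Y ∈ S
  shift_mem : ∀ (X : C) (n : ℤ), X ∈ S → X⟦n⟧ ∈ S
  ext₃ : ∀ T : Triangle C, T ∈ (distTriang C) → T.obj₁ ∈ S → T.obj₂ ∈ S → T.obj₃ ∈ S

/-- A class of objects is closed under small coproducts. -/
def ClosedUnderCoproducts {C : Type u} [Category.{v} C] [HasCoproducts.{v} C]
    (S : Set C) : Prop :=
  ∀ (J : Type v) (X : J → C), (∀ j, X j ∈ S) → (∐ X) ∈ S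

/-- A class of objects is closed under direct summands (retracts). -/
def ClosedUnderRetracts {C : Type u} [Category.{v} C] (S : Set C) : Prop :=
  ∀ X Y : C, (∃ (i : X ⟶ Y) (r : Y ⟶ X), i ≫ r = 𝟙 X) → Y ∈ S → X ∈ S

lemma DirectSum.exact_map {ι : Type*} {α β γ : ι → Type*}
    [∀ i, AddCommMonoid (α i)] [∀ i, AddCommMonoid (β i)] [∀ i, AddCommMonoid (γ i)]
    {f : ∀ i, α i →+ β i} {g : ∀ i, β i →+ γ i} (h : ∀ i, Function.Exact (f i) (g i)) :
    Function.Exact (DirectSum.map f) (DirectSum.map g) := by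
  classical
  intro y
  constructor
  · intro hy
    rw [← DirectSum.sum_support_of y]
    refine AddSubmonoid.sum_mem (AddMonoidHom.mrange (DirectSum.map f)) fun i _ => ?_
    obtain ⟨x, hx⟩ := (h i (y i)).1 (by simpa using congrArg (· i) hy)
    exact ⟨DirectSum.of α i x, by rw [DirectSum.map_of, hx]⟩
  · rintro ⟨x, rfl⟩
    ext i
    simp [(h i).apply_apply_eq_zero]

lemma exact_leftComp_of_distTriang {C : Type u} [Category.{v} C] [HasZeroObject C] [Preadditive C]
    [HasShift C ℤ] [∀ n : ℤ, (shiftFunctor C n).Additive] [Pretriangulated C]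
    {T : Triangle C} (hT : T ∈ distTriang C) (Y : C) :
    Function.Exact (Preadditive.leftComp Y T.mor₂) (Preadditive.leftComp Y T.mor₁) := by
  intro y
  constructor
  · intro hy
    obtain ⟨z, hz⟩ := Triangle.yoneda_exact₂ T hT y hy
    exact ⟨z, hz.symm⟩
  · rintro ⟨z, rfl⟩
    exact (comp_distTriang_mor_zero₁₂_assoc T hT z).trans zero_comp

section Comparison

variable {C : Type u} [Category.{v} C] [Preadditive C] [HasCoproducts.{v} C]
  {J : Type v} [DecidableEq J]

noncomputable def sumHomToHomSigma (c : C) (X : J → C) : (⨁ j, (c ⟶ X j)) →+ (c ⟶ ∐ X) :=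
  toAddMonoid fun j => Preadditive.rightComp c (Sigma.ι X j)

@[simp]
lemma sumHomToHomSigma_of (c : C) (X : J → C) (j : J) (x : c ⟶ X j) :
    sumHomToHomSigma c X (of _ j x) = x ≫ Sigma.ι X j := by
  simp [sumHomToHomSigma, Preadditive.rightComp]

lemma leftComp_comp_sumHomToHomSigma {c' c : C} (X : J → C) (h : c' ⟶ c) :
    (Preadditive.leftComp (∐ X) h).comp (sumHomToHomSigma c X) =
      (sumHomToHomSigma c' X).comp (DirectSum.map fun j => Preadditive.leftComp (X j) h) := by
  ext j x
  simp [Preadditive.leftComp]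

lemma sumHomToHomSigma_map_leftComp {c' c : C} (X : J → C) (h : c' ⟶ c) (d : ⨁ j, (c ⟶ X j)) :
    sumHomToHomSigma c' X (DirectSum.map (fun j => Preadditive.leftComp (X j) h) d) =
      h ≫ sumHomToHomSigma c X d :=
  (DFunLike.congr_fun (leftComp_comp_sumHomToHomSigma X h) d).symm

lemma IsCompactObj.bijective {c : C} (hc : IsCompactObj c) (X : J → C) :
    Function.Bijective (sumHomToHomSigma c X) := by
  unfold sumHomToHomSigma
  convert hc J X

lemma IsCompactObj.of_bijective {c : C}
    (h : ∀ (J : Type v) [DecidableEq J] (X : J → C), Function.Bijective (sumHomToHomSigma c X)) :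
    IsCompactObj c :=
  fun J X => @h J (Classical.decEq J) X

end Comparison

section Compact

variable {C : Type u} [Category.{v} C] [Preadditive C] [HasCoproducts.{v} C]

lemma IsCompactObj.of_retract {a b : C} (i : a ⟶ b) (r : b ⟶ a) (hir : i ≫ r = 𝟙 a)
    (hb : IsCompactObj b) : IsCompactObj a := by
  refine .of_bijective fun J _ X => ⟨fun d₁ d₂ hd => ?_, fun f => ?_⟩
  · have hri : ∀ d : ⨁ j, (a ⟶ X j), DirectSum.map (fun j => Preadditive.leftComp (X j) i)
        (DirectSum.map (fun j => Preadditive.leftComp (X j) r) d) = d := by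
      intro d
      ext j
      simp [Preadditive.leftComp, reassoc_of% hir]
    have : DirectSum.map (fun j => Preadditive.leftComp (X j) r) d₁ =
        DirectSum.map (fun j => Preadditive.leftComp (X j) r) d₂ :=
      (hb.bijective X).1 (by rw [sumHomToHomSigma_map_leftComp, sumHomToHomSigma_map_leftComp, hd])
    rw [← hri d₁, ← hri d₂, this]
  · obtain ⟨d, hd⟩ := (hb.bijective X).2 (r ≫ f)
    exact ⟨DirectSum.map (fun j => Preadditive.leftComp (X j) i) d,
      by rw [sumHomToHomSigma_map_leftComp, hd, reassoc_of% hir]⟩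

lemma IsCompactObj.of_iso {a b : C} (e : a ≅ b) (ha : IsCompactObj a) : IsCompactObj b :=
  ha.of_retract e.inv e.hom e.inv_hom_id

lemma isCompactObj_of_isZero {a : C} (h : IsZero a) : IsCompactObj a :=
  .of_bijective fun _ _ _ => ⟨fun _ _ _ => DFinsupp.ext fun _ => h.eq_of_src _ _,
    fun _ => ⟨0, h.eq_of_src _ _⟩⟩

lemma IsCompactObj.obj_of_adjunction {D : Type u'} [Category.{v} D] [Preadditive D]
    [HasCoproducts.{v} D] {F : C ⥤ D} {G : D ⥤ C} [F.Additive] (adj : F ⊣ G)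
    [∀ J : Type v, PreservesColimitsOfShape (Discrete J) G] {c : C} (hc : IsCompactObj c) :
    IsCompactObj (F.obj c) := by
  refine .of_bijective fun J _ X => ?_
  have square : (adj.homAddEquiv c (∐ X)).toAddMonoidHom.comp (sumHomToHomSigma (F.obj c) X) =
      ((Preadditive.rightComp c (sigmaComparison G X)).comp
        (sumHomToHomSigma c fun j => G.obj (X j))).comp
          (DirectSum.map fun j => (adj.homAddEquiv c (X j)).toAddMonoidHom) := by
    ext j x
    simp [Preadditive.rightComp, Adjunction.homEquiv_naturality_right]
  have hcomparison : Function.Bijective (Preadditive.rightComp c (sigmaComparison G X)) :=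
    ⟨fun x y h => by simpa [Preadditive.rightComp] using h =≫ inv (sigmaComparison G X),
      fun y => ⟨y ≫ inv (sigmaComparison G X), by simp [Preadditive.rightComp]⟩⟩
  have hmap : Function.Bijective
      (DirectSum.map fun j => (adj.homAddEquiv c (X j)).toAddMonoidHom) :=
    ⟨(DirectSum.map_injective _).2 fun j => (adj.homAddEquiv c (X j)).injective,
      (DirectSum.map_surjective _).2 fun j => (adj.homAddEquiv c (X j)).surjective⟩
  rw [← (adj.homAddEquiv c (∐ X)).bijective.of_comp_iff']
  convert (hcomparison.comp (hc.bijective _)).comp hmap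
  exact congrArg DFunLike.coe square

lemma IsCompactObj.shift [HasShift C ℤ] [∀ n : ℤ, (shiftFunctor C n).Additive] {c : C}
    (hc : IsCompactObj c) (n : ℤ) : IsCompactObj (c⟦n⟧) :=
  hc.obj_of_adjunction (F := shiftFunctor C n) (shiftEquiv C n).toAdjunction

end Compact

section Triangulated

variable {C : Type u} [Category.{v} C] [HasZeroObject C] [Preadditive C]
  [HasShift C ℤ] [∀ n : ℤ, (shiftFunctor C n).Additive] [Pretriangulated C]
  [HasCoproducts.{v} C]

lemma IsCompactObj.of_distTriang {T : Triangle C} (hT : T ∈ distTriang C)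
    (h₁ : IsCompactObj T.obj₁) (h₂ : IsCompactObj T.obj₂) : IsCompactObj T.obj₃ := by
  have hT₁ := rot_of_distTriang _ hT
  have hT₂ := rot_of_distTriang _ hT₁
  -- five lemma: `sumHomToHomSigma _ X` maps the exact `Hom(-, X j)`-sequences of
  -- `T.obj₁ ⟶ T.obj₂ ⟶ T.obj₃ ⟶ T.obj₁⟦1⟧ ⟶ T.obj₂⟦1⟧`, summed over `j`, to that of `Hom(-, ∐ X)`
  exact .of_bijective fun J _ X =>
    AddMonoidHom.bijective_of_surjective_of_bijective_of_bijective_of_injective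
      _ _ _ _ _ _ _ _ _ _ _ _ _
      (leftComp_comp_sumHomToHomSigma X T.rotate.rotate.mor₂)
      (leftComp_comp_sumHomToHomSigma X T.mor₃) (leftComp_comp_sumHomToHomSigma X T.mor₂)
      (leftComp_comp_sumHomToHomSigma X T.mor₁)
      (DirectSum.exact_map fun _ => exact_leftComp_of_distTriang hT₂ _)
      (DirectSum.exact_map fun _ => exact_leftComp_of_distTriang hT₁ _)
      (DirectSum.exact_map fun _ => exact_leftComp_of_distTriang hT _)
      (exact_leftComp_of_distTriang hT₂ _) (exact_leftComp_of_distTriang hT₁ _)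
      (exact_leftComp_of_distTriang hT _)
      ((h₂.shift 1).bijective X).2 ((h₁.shift 1).bijective X) (h₂.bijective X) (h₁.bijective X).1

lemma isTriangSub_isCompactObj : IsTriangSub C {c | IsCompactObj c} where
  zero_mem := isCompactObj_of_isZero (isZero_zero C)
  mem_of_iso e h := h.of_iso e
  shift_mem _ n h := h.shift n
  ext₃ _ hT h₁ h₂ := IsCompactObj.of_distTriang hT h₁ h₂

end Triangulated

section TriangSub

variable {C : Type u} [Category.{v} C] [HasZeroObject C] [Preadditive C]
  [HasShift C ℤ] [∀ n : ℤ, (shiftFunctor C n).Additive] [Pretriangulated C]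

lemma IsTriangSub.preimage {D : Type u'} [Category.{v} D] [HasZeroObject D] [Preadditive D]
    [HasShift D ℤ] [∀ n : ℤ, (shiftFunctor D n).Additive] [Pretriangulated D]
    {S : Set D} (hS : IsTriangSub D S) (L : C ⥤ D) [L.CommShift ℤ] [L.IsTriangulated] :
    IsTriangSub C {X | L.obj X ∈ S} where
  zero_mem := hS.mem_of_iso (L.map_isZero (isZero_zero C)).isoZero.symm hS.zero_mem
  mem_of_iso e h := hS.mem_of_iso (L.mapIso e) h
  shift_mem X n h := hS.mem_of_iso ((L.commShiftIso n).app X).symm (hS.shift_mem _ n h)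
  ext₃ T hT h₁ h₂ := hS.ext₃ (L.mapTriangle.obj T) (L.map_distinguished T hT) h₁ h₂

lemma IsTriangSub.biprod_mem {S : Set C} (hS : IsTriangSub C S) {a b : C} (ha : a ∈ S)
    (hb : b ∈ S) : (a ⊞ b) ∈ S :=
  hS.ext₃ _ (inv_rot_of_distTriang _ (binaryBiproductTriangle_distinguished a b))
    (hS.shift_mem b (-1) hb) ha

def triangClosure (E : Set C) : Set C :=
  {X | ∀ S, IsTriangSub C S → E ⊆ S → X ∈ S}

lemma isTriangSub_triangClosure (E : Set C) : IsTriangSub C (triangClosure E) where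
  zero_mem _ hS _ := hS.zero_mem
  mem_of_iso e h S hS hE := hS.mem_of_iso e (h S hS hE)
  shift_mem X n h S hS hE := hS.shift_mem X n (h S hS hE)
  ext₃ T hT h₁ h₂ S hS hE := hS.ext₃ T hT (h₁ S hS hE) (h₂ S hS hE)

lemma subset_triangClosure (E : Set C) : E ⊆ triangClosure E :=
  fun _ hX _ _ hE => hE hX

lemma triangClosure_subset {E S : Set C} (hS : IsTriangSub C S) (hE : E ⊆ S) :
    triangClosure E ⊆ S :=
  fun _ hX => hX S hS hE

end TriangSub

section Factorization

variable {C : Type u} [Category.{v} C]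

def FactorsThrough (S : Set C) {X Y : C} (f : X ⟶ Y) : Prop :=
  ∃ W ∈ S, ∃ (g : X ⟶ W) (h : W ⟶ Y), g ≫ h = f

variable {S : Set C}

lemma factorsThrough_of_mem {X Y : C} (f : X ⟶ Y) (hY : Y ∈ S) : FactorsThrough S f :=
  ⟨Y, hY, f, 𝟙 Y, Category.comp_id f⟩

lemma factorsThrough_comp_of_mem {X W Y : C} {g : X ⟶ W} {h : W ⟶ Y} (hW : W ∈ S) :
    FactorsThrough S (g ≫ h) :=
  ⟨W, hW, g, h, rfl⟩

lemma FactorsThrough.comp {X Y Z : C} {f : X ⟶ Y} (hf : FactorsThrough S f) (k : Y ⟶ Z) :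
    FactorsThrough S (f ≫ k) := by
  obtain ⟨W, hW, g, h, rfl⟩ := hf
  exact ⟨W, hW, g, h ≫ k, (Category.assoc g h k).symm⟩

lemma FactorsThrough.homEquiv {D : Type u'} [Category.{v} D] {S' : Set D} {F : C ⥤ D}
    {G : D ⥤ C} (adj : F ⊣ G) (hG : ∀ W ∈ S', G.obj W ∈ S) {X : C} {Y : D}
    {f : F.obj X ⟶ Y} (hf : FactorsThrough S' f) : FactorsThrough S (adj.homEquiv X Y f) := by
  obtain ⟨W, hW, g, h, rfl⟩ := hf
  exact ⟨G.obj W, hG W hW, adj.homEquiv X W g, G.map h,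
    (adj.homEquiv_naturality_right g h).symm⟩

end Factorization

section FactorClass

variable {C : Type u} [Category.{v} C] [Preadditive C] [HasCoproducts.{v} C] {S : Set C}

def FactorClass (S : Set C) : Set C :=
  {X | ∀ c : C, IsCompactObj c → ∀ f : c ⟶ X, FactorsThrough S f}

lemma subset_factorClass : S ⊆ FactorClass S :=
  fun _ hX _ _ f => factorsThrough_of_mem f hX

end FactorClass

section Pretriangulated

variable {C : Type u} [Category.{v} C] [HasZeroObject C] [Preadditive C]
  [HasShift C ℤ] [∀ n : ℤ, (shiftFunctor C n).Additive] [Pretriangulated C] {S : Set C}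

lemma FactorsThrough.add (hS : IsTriangSub C S) {X Y : C} {f₁ f₂ : X ⟶ Y}
    (h₁ : FactorsThrough S f₁) (h₂ : FactorsThrough S f₂) : FactorsThrough S (f₁ + f₂) := by
  obtain ⟨W₁, hW₁, g₁, k₁, rfl⟩ := h₁
  obtain ⟨W₂, hW₂, g₂, k₂, rfl⟩ := h₂
  exact ⟨W₁ ⊞ W₂, hS.biprod_mem hW₁ hW₂, biprod.lift g₁ g₂, biprod.desc k₁ k₂, biprod.lift_desc⟩

lemma FactorsThrough.of_shift (hS : IsTriangSub C S) {X Y : C} {f : X ⟶ Y} (n : ℤ)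
    (hf : FactorsThrough S (f⟦n⟧')) : FactorsThrough S f := by
  let ε := shiftFunctorCompIsoId C n (-n) (add_neg_cancel n)
  obtain ⟨W, hW, g, h, hgh⟩ := hf
  refine ⟨W⟦-n⟧, hS.shift_mem W (-n) hW, ε.inv.app X ≫ g⟦-n⟧', h⟦-n⟧' ≫ ε.hom.app Y, ?_⟩
  have := ε.inv.naturality f
  simp only [Functor.comp_map, Functor.id_map] at this
  rw [Category.assoc, ← Functor.map_comp_assoc, hgh, ← Category.assoc, ← this, Category.assoc,
    Iso.inv_hom_id_app, Category.comp_id]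

variable [HasCoproducts.{v} C]

lemma shift_mem_factorClass (hS : IsTriangSub C S) {X : C} (hX : X ∈ FactorClass S) (n : ℤ) :
    X⟦n⟧ ∈ FactorClass S := by
  intro c hc f
  let adj : shiftFunctor C (-n) ⊣ shiftFunctor C n := (shiftEquiv C n).symm.toAdjunction
  have := (hX _ (hc.shift (-n)) ((adj.homEquiv c X).symm f)).homEquiv adj
    fun W hW => hS.shift_mem W n hW
  rwa [Equiv.apply_symm_apply] at this

lemma factorsThrough_shift_of_distTriang (hS : IsTriangSub C S)
    (hSc : ∀ W ∈ S, IsCompactObj W) {T : Triangle C} (hT : T ∈ distTriang C)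
    (h₂ : T.obj₂ ∈ FactorClass S) (h₃ : T.obj₃ ∈ FactorClass S) {c : C} (hc : IsCompactObj c)
    (f : c ⟶ T.obj₁) : FactorsThrough S (f⟦(1 : ℤ)⟧') := by
  -- `f⟦1⟧'` is `κ ≫ t`, through the cone `V` of `W₁ ⟶ W₂`, plus a map through `W₁⟦1⟧`
  obtain ⟨W₁, hW₁, a, b, hab⟩ := h₂ c hc (f ≫ T.mor₁)
  obtain ⟨Q, p, q, hA⟩ := distinguished_cocone_triangle a
  obtain ⟨g, hpg, hqg⟩ := complete_distinguished_triangle_morphism _ _ hA hT f b hab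
  obtain ⟨W₂, hW₂, g₁, g₂, rfl⟩ := h₃ Q (hc.of_distTriang hA (hSc W₁ hW₁)) g
  obtain ⟨V, l, m, hB⟩ := distinguished_cocone_triangle (p ≫ g₁)
  obtain ⟨t, ht⟩ : ∃ t : V ⟶ T.obj₁⟦(1 : ℤ)⟧, g₂ ≫ T.mor₃ = l ≫ t :=
    Triangle.yoneda_exact₂ _ hB _ (by
      change p ≫ g₁ ≫ g₂ = b ≫ T.mor₂ at hpg
      change (p ≫ g₁) ≫ g₂ ≫ T.mor₃ = 0
      rw [Category.assoc, reassoc_of% hpg, comp_distTriang_mor_zero₂₃ _ hT, comp_zero])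
  obtain ⟨κ, hκ⟩ : ∃ κ : c⟦(1 : ℤ)⟧ ⟶ V, g₁ ≫ l = q ≫ κ :=
    Triangle.yoneda_exact₃ _ hA _
      ((Category.assoc _ _ _).symm.trans (comp_distTriang_mor_zero₁₂ _ hB))
  obtain ⟨r, hr⟩ : ∃ r : W₁⟦(1 : ℤ)⟧ ⟶ T.obj₁⟦(1 : ℤ)⟧,
      f⟦(1 : ℤ)⟧' - κ ≫ t = (Triangle.mk a p q).rotate.mor₃ ≫ r :=
    Triangle.yoneda_exact₃ _ (rot_of_distTriang _ hA) _ (by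
      change q ≫ f⟦(1 : ℤ)⟧' = (g₁ ≫ g₂) ≫ T.mor₃ at hqg
      change q ≫ (f⟦(1 : ℤ)⟧' - κ ≫ t) = 0
      rw [Preadditive.comp_sub, hqg, ← reassoc_of% hκ, Category.assoc, ht, sub_self])
  rw [← sub_add_cancel (f⟦(1 : ℤ)⟧') (κ ≫ t), hr]
  exact (factorsThrough_comp_of_mem (hS.shift_mem W₁ 1 hW₁)).add hS
    (factorsThrough_comp_of_mem (hS.ext₃ _ hB hW₁ hW₂))

lemma isTriangSub_factorClass (hS : IsTriangSub C S) (hSc : ∀ W ∈ S, IsCompactObj W) :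
    IsTriangSub C (FactorClass S) where
  zero_mem := subset_factorClass hS.zero_mem
  mem_of_iso e hX c hc f := by simpa using (hX c hc (f ≫ e.inv)).comp e.hom
  shift_mem _ n hX := shift_mem_factorClass hS hX n
  ext₃ _ hT h₁ h₂ _ hc f :=
    (factorsThrough_shift_of_distTriang hS hSc (rot_of_distTriang _ (rot_of_distTriang _ hT))
      (shift_mem_factorClass hS h₁ 1) (shift_mem_factorClass hS h₂ 1) hc f).of_shift hS 1

lemma closedUnderCoproducts_factorClass (hS : IsTriangSub C S) :
    ClosedUnderCoproducts (FactorClass S) := by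
  classical
  intro J X hX c hc f
  obtain ⟨d, rfl⟩ := (hc.bijective X).2 f
  induction d using DirectSum.induction_on with
  | zero => exact ⟨0, hS.zero_mem, 0, 0, by simp⟩
  | of j x => simpa using (hX j c hc x).comp (Sigma.ι X j)
  | add x y hx hy => simpa using hx.add hS hy

end Pretriangulated

/-- Let `C` be compactly generated by a set `E` of compact objects and let `L : C ⥤ D` be an
exact (triangulated) functor preserving small coproducts. Then `L` preserves compact objects
if and only if `L e` is compact for every `e ∈ E`. -/
theorem stmt2 {C : Type u} [Category.{v} C] [HasZeroObject C] [Preadditive C]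
    [HasShift C ℤ] [∀ n : ℤ, (shiftFunctor C n).Additive] [Pretriangulated C]
    [IsTriangulated C] [HasCoproducts.{v} C]
    {D : Type u'} [Category.{v} D] [HasZeroObject D] [Preadditive D]
    [HasShift D ℤ] [∀ n : ℤ, (shiftFunctor D n).Additive] [Pretriangulated D]
    [IsTriangulated D] [HasCoproducts.{v} D]
    (E : Set C) (hE : ∀ e ∈ E, IsCompactObj e)
    (hgen : ∀ S : Set C, IsTriangSub C S → ClosedUnderCoproducts S → E ⊆ S →
      S = Set.univ)
    (L : C ⥤ D) [L.Additive] [L.CommShift ℤ] [L.IsTriangulated]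
    (hL : ∀ J : Type v, PreservesColimitsOfShape (Discrete J) L) :
    (∀ X : C, IsCompactObj X → IsCompactObj (L.obj X)) ↔
      ∀ e ∈ E, IsCompactObj (L.obj e) := by
  refine ⟨fun h e he => h e (hE e he), fun hLE X hX => ?_⟩
  have hS := isTriangSub_triangClosure E
  have hF : FactorClass (triangClosure E) = Set.univ :=
    hgen _ (isTriangSub_factorClass hS (triangClosure_subset isTriangSub_isCompactObj hE))
      (closedUnderCoproducts_factorClass hS) ((subset_triangClosure E).trans subset_factorClass)
  obtain ⟨W, hW, i, r, hir⟩ := (hF ▸ Set.mem_univ X : X ∈ FactorClass _) X hX (𝟙 X)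
  have hLW : IsCompactObj (L.obj W) :=
    triangClosure_subset (isTriangSub_isCompactObj.preimage L) hLE hW
  exact hLW.of_retract (L.map i) (L.map r) (by rw [← L.map_comp, hir, L.map_id])
end

section
/- Let C be a locally small category with all small colimits such that the full subcategory C^ω of compact (ℵ₀-presentable) objects is essentially small and every object of C is the colimit of a small filtered diagram with values in C^ω. Let τ be an uncountable regular cardinal. Then an object of C is τ-presentable if and only if it is a retract of the colimit of a τ-small filtered diagram with values in C^ω. -/
universe w v u u'

open CategoryTheory Limits Opposite

/-- A small filtered diagram in `C` with values in compact (`ℵ₀`-presentable) objects. -/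
structure CompactFilteredDiagram (C : Type u) [Category.{v} C] where
  /-- the indexing category -/
  J : Type v
  /-- the category structure on `J` -/
  [instJ : SmallCategory J]
  /-- the indexing category is filtered -/
  filtered : IsFiltered J
  /-- the diagram -/
  F : J ⥤ C
  /-- the diagram takes values in compact objects -/
  compact : ∀ j, IsCardPresentable Cardinal.aleph0 (F.obj j)

attribute [instance] CompactFilteredDiagram.instJ

lemma hasCardinalLT_arrow_of_preorder {α : Type u} [Preorder α] {κ : Cardinal.{w}}
    (hκ : Cardinal.aleph0 ≤ κ) (h : HasCardinalLT α κ) : HasCardinalLT (Arrow α) κ :=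
  (hasCardinalLT_prod hκ h h).of_injective (fun f ↦ (f.left, f.right)) fun f g hfg ↦ by
    obtain ⟨hl, hr⟩ := Prod.mk.inj hfg
    exact Arrow.ext hl hr (Subsingleton.elim _ _)

lemma hasCardinalLT_image2 {α β γ : Type*} (f : α → β → γ) {s : Set α} {t : Set β}
    {κ : Cardinal.{w}} (hκ : Cardinal.aleph0 ≤ κ) (hs : HasCardinalLT s κ)
    (ht : HasCardinalLT t κ) : HasCardinalLT (Set.image2 f s t) κ :=
  (hasCardinalLT_prod hκ hs ht).of_surjective
    (fun p ↦ ⟨f p.1 p.2, Set.mem_image2_of_mem p.1.2 p.2.2⟩)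
    (by rintro ⟨_, a, ha, b, hb, rfl⟩; exact ⟨(⟨a, ha⟩, ⟨b, hb⟩), rfl⟩)

lemma exists_directedOn_superset {α : Type u} [Preorder α] [IsDirectedOrder α] [Nonempty α]
    {κ : Cardinal.{w}} [Fact κ.IsRegular] (hκ : Cardinal.aleph0 < κ) {T : Set α}
    (hT : HasCardinalLT T κ) :
    ∃ S : Set α, T ⊆ S ∧ S.Nonempty ∧ DirectedOn (· ≤ ·) S ∧ HasCardinalLT S κ := by
  choose ub hub using fun a b : α ↦ exists_ge_ge a b
  obtain ⟨a₀⟩ := ‹Nonempty α›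
  let s : ℕ → Set α := fun n ↦ Nat.rec (insert a₀ T) (fun _ t ↦ t ∪ Set.image2 ub t t) n
  have hs : Monotone s := monotone_nat_of_le_succ fun n ↦ Set.subset_union_left
  have hcard (n : ℕ) : HasCardinalLT ↥(s n) κ := by
    induction n with
    | zero =>
      change HasCardinalLT ↥({a₀} ∪ T) κ
      exact hasCardinalLT_union hκ.le (hasCardinalLT_of_finite _ _ hκ.le) hT
    | succ n ih =>
      exact hasCardinalLT_union (S₁ := s n) hκ.le ih (hasCardinalLT_image2 ub hκ.le ih ih)
  refine ⟨⋃ n, s n, fun x hx ↦ Set.mem_iUnion_of_mem 0 (Set.mem_insert_of_mem _ hx),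
    ⟨a₀, Set.mem_iUnion_of_mem 0 (Set.mem_insert _ _)⟩, ?_,
    hasCardinalLT_iUnion _ (by simpa [HasCardinalLT] using hκ) hcard⟩
  intro x hx y hy
  obtain ⟨m, hx⟩ := Set.mem_iUnion.1 hx
  obtain ⟨n, hy⟩ := Set.mem_iUnion.1 hy
  refine ⟨ub x y, Set.mem_iUnion_of_mem (max m n + 1) (Or.inr ?_), hub x y⟩
  exact Set.mem_image2_of_mem (hs (le_max_left m n) hx) (hs (le_max_right m n) hy)

abbrev DirectedSubset (κ : Cardinal.{w}) (α : Type u) [Preorder α] : Type u :=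
  {S : Set α // S.Nonempty ∧ DirectedOn (· ≤ ·) S ∧ HasCardinalLT S κ}

namespace DirectedSubset

variable {κ : Cardinal.{w}} {α : Type w} [Preorder α]

instance (S : DirectedSubset κ α) : IsFiltered S.1 :=
  have := S.2.2.1.isDirectedOrder
  have := S.2.1.to_subtype
  inferInstance

variable [IsDirectedOrder α] [Nonempty α] [Fact κ.IsRegular]

lemma exists_superset (hκ : Cardinal.aleph0 < κ) {T : Set α} (hT : HasCardinalLT T κ) :
    ∃ S : DirectedSubset κ α, T ⊆ S.1 :=
  have ⟨S, hTS, hS⟩ := exists_directedOn_superset hκ hT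
  ⟨⟨S, hS⟩, hTS⟩

lemma isCardinalFiltered (hκ : Cardinal.aleph0 < κ) : IsCardinalFiltered (DirectedSubset κ α) κ :=
  isCardinalFiltered_preorder _ _ fun _ f hK ↦
    have ⟨S, hfS⟩ := exists_superset hκ (hasCardinalLT_iUnion (fun k ↦ (f k).1)
      ((hasCardinalLT_iff_cardinal_mk_lt _ _).2 hK) fun k ↦ (f k).2.2.2)
    ⟨S, fun k ↦ (Set.subset_iUnion (fun k ↦ (f k).1) k).trans hfS⟩

end DirectedSubset

section SubsetColimit

variable {C : Type u} [Category.{v} C] [HasColimitsOfSize.{v, v} C] {α : Type v} [Preorder α]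
  (G : α ⥤ C) (κ : Cardinal.{v})

abbrev CategoryTheory.Functor.restrictSubset (S : Set α) : S ⥤ C where
  obj a := G.obj a.1
  map f := G.map f
  map_id _ := G.map_id _
  map_comp _ _ := G.map_comp _ _

noncomputable def restrictSubsetColimitι (S : Set α) : colimit (G.restrictSubset S) ⟶ colimit G :=
  colimit.desc (G.restrictSubset S)
    { pt := colimit G
      ι.app a := colimit.ι G a.1
      ι.naturality _ _ f := (colimit.w G (homOfLE f.le)).trans (Category.comp_id _).symm }

@[simp]
lemma ι_restrictSubsetColimitι (S : Set α) (a : S) :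
    colimit.ι (G.restrictSubset S) a ≫ restrictSubsetColimitι G S = colimit.ι G a.1 :=
  colimit.ι_desc _ _

noncomputable def subsetColimitMap {S T : DirectedSubset κ α} (h : S ≤ T) :
    colimit (G.restrictSubset S.1) ⟶ colimit (G.restrictSubset T.1) :=
  colimit.desc (G.restrictSubset S.1)
    { pt := colimit (G.restrictSubset T.1)
      ι.app a := colimit.ι (G.restrictSubset T.1) ⟨a.1, h a.2⟩
      ι.naturality a b f :=
        (colimit.w (G.restrictSubset T.1) (j := ⟨b.1, h b.2⟩) (j' := ⟨a.1, h a.2⟩) f).trans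
          (Category.comp_id _).symm }

@[simp]
lemma ι_subsetColimitMap {S T : DirectedSubset κ α} (h : S ≤ T) (a : S.1) :
    colimit.ι (G.restrictSubset S.1) a ≫ subsetColimitMap G κ h =
      colimit.ι (G.restrictSubset T.1) ⟨a.1, h a.2⟩ :=
  colimit.ι_desc _ _

noncomputable abbrev subsetColimitFunctor : DirectedSubset κ α ⥤ C where
  obj S := colimit (G.restrictSubset S.1)
  map h := subsetColimitMap G κ (leOfHom h)
  map_id S := colimit.hom_ext fun a ↦ by simp
  map_comp f g := colimit.hom_ext fun a ↦ by
    simp only [← Category.assoc, ι_subsetColimitMap]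

noncomputable def subsetColimitDesc : colimit (subsetColimitFunctor G κ) ⟶ colimit G :=
  colimit.desc _
    { pt := colimit G
      ι.app S := restrictSubsetColimitι G S.1
      ι.naturality S T h := colimit.hom_ext fun a ↦ by simp [← Category.assoc] }

variable {G κ}

lemma ι_subsetColimitFunctor_of_le {S T : DirectedSubset κ α} (h : S ≤ T) {a : α}
    (ha : a ∈ S.1) :
    colimit.ι (G.restrictSubset S.1) ⟨a, ha⟩ ≫ colimit.ι (subsetColimitFunctor G κ) S =
      colimit.ι (G.restrictSubset T.1) ⟨a, h ha⟩ ≫ colimit.ι (subsetColimitFunctor G κ) T := by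
  rw [← colimit.w (subsetColimitFunctor G κ) (homOfLE h)]
  simp only [← Category.assoc, ι_subsetColimitMap]

end SubsetColimit

section Retract

variable {C : Type u} [Category.{v} C] [HasColimitsOfSize.{v, v} C] {α : Type v} [Preorder α]
  [IsDirectedOrder α] [Nonempty α] {κ : Cardinal.{v}} [Fact κ.IsRegular]
  (hκ : Cardinal.aleph0 < κ) (G : α ⥤ C)

include hκ

lemma ι_subsetColimitFunctor_eq {S T : DirectedSubset κ α} {a : α} (hS : a ∈ S.1)
    (hT : a ∈ T.1) :
    colimit.ι (G.restrictSubset S.1) ⟨a, hS⟩ ≫ colimit.ι (subsetColimitFunctor G κ) S =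
      colimit.ι (G.restrictSubset T.1) ⟨a, hT⟩ ≫ colimit.ι (subsetColimitFunctor G κ) T := by
  obtain ⟨U, hU⟩ := DirectedSubset.exists_superset hκ (hasCardinalLT_union hκ.le S.2.2.2 T.2.2.2)
  rw [ι_subsetColimitFunctor_of_le (Set.union_subset_iff.1 hU).1,
    ι_subsetColimitFunctor_of_le (Set.union_subset_iff.1 hU).2]

noncomputable def subsetColimitLeg (a : α) : G.obj a ⟶ colimit (subsetColimitFunctor G κ) :=
  have h := DirectedSubset.exists_superset hκ (hasCardinalLT_of_finite ({a} : Set α) κ hκ.le)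
  colimit.ι (G.restrictSubset h.choose.1) ⟨a, h.choose_spec rfl⟩ ≫
    colimit.ι (subsetColimitFunctor G κ) h.choose

lemma subsetColimitLeg_eq {S : DirectedSubset κ α} {a : α} (ha : a ∈ S.1) :
    subsetColimitLeg hκ G a =
      colimit.ι (G.restrictSubset S.1) ⟨a, ha⟩ ≫ colimit.ι (subsetColimitFunctor G κ) S :=
  ι_subsetColimitFunctor_eq hκ G _ ha

noncomputable def subsetColimitSection : colimit G ⟶ colimit (subsetColimitFunctor G κ) :=
  colimit.desc G
    { pt := colimit (subsetColimitFunctor G κ)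
      ι.app := subsetColimitLeg hκ G
      ι.naturality a b f := by
        obtain ⟨S, hS⟩ := DirectedSubset.exists_superset hκ
          (hasCardinalLT_of_finite ({a, b} : Set α) κ hκ.le)
        have ha : a ∈ S.1 := hS (.inl rfl)
        have hb : b ∈ S.1 := hS (.inr rfl)
        rw [subsetColimitLeg_eq hκ G ha, subsetColimitLeg_eq hκ G hb, ← Category.assoc]
        exact (congrArg (· ≫ colimit.ι (subsetColimitFunctor G κ) S)
          (colimit.w (G.restrictSubset S.1) (j := ⟨b, hb⟩) (j' := ⟨a, ha⟩) f)).trans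
            (Category.comp_id _).symm }

lemma subsetColimitSection_comp_desc :
    subsetColimitSection hκ G ≫ subsetColimitDesc G κ = 𝟙 (colimit G) := by
  refine colimit.hom_ext fun a ↦ ?_
  obtain ⟨S, hS⟩ := DirectedSubset.exists_superset hκ
    (hasCardinalLT_of_finite ({a} : Set α) κ hκ.le)
  simp [subsetColimitSection, subsetColimitLeg_eq hκ G (hS rfl), subsetColimitDesc]

theorem exists_retract_colimit_restrictSubset {X : C} [IsCardinalPresentable X κ]
    (e : Retract X (colimit G)) :
    ∃ S : DirectedSubset κ α, Nonempty (Retract X (colimit (G.restrictSubset S.1))) := by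
  have := DirectedSubset.isCardinalFiltered (α := α) hκ
  have := essentiallySmallSelf (DirectedSubset κ α)
  obtain ⟨S, g, hg⟩ := IsCardinalPresentable.exists_hom_of_isColimit κ
    (colimit.isColimit (subsetColimitFunctor G κ)) (e.i ≫ subsetColimitSection hκ G)
  replace hg : g ≫ colimit.ι (subsetColimitFunctor G κ) S = e.i ≫ subsetColimitSection hκ G := hg
  refine ⟨S, ⟨g, restrictSubsetColimitι G S.1 ≫ e.r, ?_⟩⟩
  calc g ≫ restrictSubsetColimitι G S.1 ≫ e.r
      = (g ≫ colimit.ι (subsetColimitFunctor G κ) S) ≫ subsetColimitDesc G κ ≫ e.r := by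
        simp [subsetColimitDesc]
    _ = 𝟙 X := by
        rw [hg, Category.assoc, ← Category.assoc (subsetColimitSection hκ G),
          subsetColimitSection_comp_desc, Category.id_comp, e.retract]

end Retract

lemma isCardinalPresentable_colimit_of_compact {C : Type u} [Category.{v} C]
    {J : Type v} [SmallCategory J] (F : J ⥤ C) [HasColimit F]
    (hF : ∀ j, IsCardPresentable Cardinal.aleph0 (F.obj j)) {κ : Cardinal.{v}} [Fact κ.IsRegular]
    (hκ : Cardinal.aleph0 ≤ κ) (hJ : HasCardinalLT (Arrow J) κ) :
    IsCardinalPresentable (colimit F) κ :=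
  have := Cardinal.fact_isRegular_aleph0
  have (j : J) : IsCardinalPresentable (F.obj j) κ :=
    have := (isCardPresentable_iff_isCardinalPresentable _ _).1 (hF j)
    isCardinalPresentable_of_le _ hκ
  isCardinalPresentable_of_isColimit _ (colimit.isColimit F) κ hJ

theorem stmt3_general {C : Type u} [Category.{v} C] [HasColimitsOfSize.{v, v} C]
    (hgen : ∀ X : C, ∃ D : CompactFilteredDiagram C, Nonempty (colimit D.F ≅ X))
    (τ : Cardinal.{v}) (hτ : τ.IsRegular) (hτ' : Cardinal.aleph0 < τ) (X : C) :
    IsCardPresentable τ X ↔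
      ∃ D : CompactFilteredDiagram C,
        Cardinal.mk D.J < τ ∧ Cardinal.mk (Arrow D.J) < τ ∧
        ∃ (i : X ⟶ colimit D.F) (r : colimit D.F ⟶ X), i ≫ r = 𝟙 X := by
  have : Fact τ.IsRegular := ⟨hτ⟩
  rw [isCardPresentable_iff_isCardinalPresentable]
  constructor
  · intro hX
    obtain ⟨D, ⟨e⟩⟩ := hgen X
    have := D.filtered
    obtain ⟨α, _, _, _, φ, _⟩ := IsFiltered.exists_directed D.J
    obtain ⟨S, ⟨r⟩⟩ := exists_retract_colimit_restrictSubset hτ' (φ ⋙ D.F)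
      (Functor.Final.colimitIso φ D.F ≪≫ e).symm.retract
    refine ⟨⟨S.1, inferInstance, _, fun j ↦ D.compact _⟩, ?_, ?_, r.i, r.r, r.retract⟩
    · exact (hasCardinalLT_iff_cardinal_mk_lt _ _).1 S.2.2.2
    · exact (hasCardinalLT_iff_cardinal_mk_lt _ _).1
        (hasCardinalLT_arrow_of_preorder hτ'.le S.2.2.2)
  · rintro ⟨D, -, hA, i, r, hir⟩
    have := isCardinalPresentable_colimit_of_compact D.F D.compact hτ'.le
      ((hasCardinalLT_iff_cardinal_mk_lt _ _).2 hA)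
    exact Retract.isCardinalPresentable ⟨i, r, hir⟩ τ

/-- In a cocomplete category whose subcategory of compact objects is essentially small and
generates under filtered colimits, for an uncountable regular cardinal `τ`, an object is
`τ`-presentable iff it is a retract of the colimit of a `τ`-small filtered diagram of
compact objects. -/
theorem stmt3 {C : Type u} [Category.{v} C] [HasColimitsOfSize.{v, v} C]
    (hsmall : EssentiallySmall.{v}
      (ObjectProperty.FullSubcategory (fun X : C => IsCardPresentable Cardinal.aleph0 X)))
    (hgen : ∀ X : C, ∃ D : CompactFilteredDiagram C, Nonempty (colimit D.F ≅ X))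
    (τ : Cardinal.{v}) (hτ : τ.IsRegular) (hτ' : Cardinal.aleph0 < τ) (X : C) :
    IsCardPresentable τ X ↔
      ∃ D : CompactFilteredDiagram C,
        Cardinal.mk D.J < τ ∧ Cardinal.mk (Arrow D.J) < τ ∧
        ∃ (i : X ⟶ colimit D.F) (r : colimit D.F ⟶ X), i ≫ r = 𝟙 X :=
  stmt3_general hgen τ hτ hτ' X
end

section
/- Let κ be a regular cardinal and let B be a type which is a κ-presentable object of the category Type. For any map of types f : E → B, the object (E, f) of the over category Over B is κ-presentable if and only if E is a κ-presentable object of Type. In other words, the forgetful (source) functor Over B → Type preserves and detects κ-presentable objects. -/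
/-
Both directions are hom-set arguments. Since `Over.forget B ⊣ Over.star B`, we have
`Hom(E, Y) ≃ Hom((E, f), (B × Y, fst))` naturally in `Y`, and in `Type` the functor
`Y ↦ B × Y` preserves filtered colimits; so `E` inherits presentability from `(E, f)`.
Conversely `Hom((E, f), Y)` is the fibre over `f` of `Hom(E, Y.left) → Hom(E, B)`, and fibres
commute with filtered colimits of types. Both facts apply since `κ`-filtered categories are
filtered once `κ` is infinite.
-/

universe w v u u'

open CategoryTheory Limits Opposite

lemma IsCardFiltered.isFiltered {J : Type w} [SmallCategory J] {κ : Cardinal.{w}}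
    (hJ : IsCardFiltered J κ) (hκ : Cardinal.aleph0 ≤ κ) : IsFiltered J :=
  IsFiltered.of_cocone_nonempty.{w} J fun {A} _ _ F =>
    hJ A F ((Cardinal.lt_aleph0_of_finite A).trans_le hκ)
      ((Cardinal.lt_aleph0_of_finite (Arrow A)).trans_le hκ)

lemma IsCardPresentable.of_preservesColimitsOfShape_imp {C : Type u} [Category.{v} C]
    {D : Type u'} [Category.{v} D] {κ : Cardinal.{v}} (hκ : Cardinal.aleph0 ≤ κ) {X : C} {Y : D}
    (h : ∀ (J : Type v) [SmallCategory J] [IsFiltered J],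
      PreservesColimitsOfShape J (coyoneda.obj (op X)) →
        PreservesColimitsOfShape J (coyoneda.obj (op Y)))
    (hX : IsCardPresentable κ X) : IsCardPresentable κ Y := fun J _ hJ =>
  have := hJ.isFiltered hκ
  h J (hX J hJ)

lemma CategoryTheory.Adjunction.preservesColimitsOfShape_coyoneda_obj_leftAdjoint_obj
    {C : Type u} [Category.{v} C] {D : Type u'} [Category.{v} D] {J : Type w} [Category J]
    {F : C ⥤ D} {G : D ⥤ C} (adj : F ⊣ G) (X : C) [PreservesColimitsOfShape J G]
    [PreservesColimitsOfShape J (coyoneda.obj (Opposite.op X))] :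
    PreservesColimitsOfShape J (coyoneda.obj (Opposite.op (F.obj X))) :=
  preservesColimitsOfShape_of_natIso (F := G ⋙ coyoneda.obj (Opposite.op X))
    (adj.compCoyonedaIso.app (Opposite.op X)).symm

namespace CategoryTheory.Over

lemma preservesColimitsOfShape_coyoneda_mk {C : Type u} [Category.{v} C] {J : Type v}
    [SmallCategory J] [IsFilteredOrEmpty J] {B X : C} (f : X ⟶ B)
    [PreservesColimitsOfShape J (forget B)] [PreservesColimitsOfShape J (coyoneda.obj (op X))] :
    PreservesColimitsOfShape J (coyoneda.obj (op (mk f))) := by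
  refine ⟨fun {F} => ⟨fun {c} hc => ⟨?_⟩⟩⟩
  have hc' := isColimitOfPreserves (coyoneda.obj (op X)) (isColimitOfPreserves (forget B) hc)
  refine Types.FilteredColimit.isColimitOf _ _ (fun x => ?_) (fun i j xi xj e => ?_)
  · obtain ⟨j, (u : X ⟶ (F.obj j).left), hu⟩ := Types.jointly_surjective _ hc' x.left
    replace hu : u ≫ (c.ι.app j).left = x.left := hu
    refine ⟨j, homMk u ?_, OverMorphism.ext hu.symm⟩
    calc u ≫ (F.obj j).hom = u ≫ (c.ι.app j).left ≫ c.pt.hom := (u ≫= Over.w (c.ι.app j)).symm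
      _ = x.left ≫ c.pt.hom := by rw [← Category.assoc, hu]
      _ = f := Over.w x
  · obtain ⟨k, g, g', h⟩ :=
      (Types.FilteredColimit.isColimit_eq_iff _ hc').mp (congrArg CommaMorphism.left e)
    exact ⟨k, g, g', OverMorphism.ext h⟩

instance preservesColimitsOfShape_star_of_isFiltered (B : Type u) (J : Type u)
    [SmallCategory J] [IsFiltered J] : PreservesColimitsOfShape J (star B) :=
  have : PreservesColimitsOfShape J (star B ⋙ forget B) :=
    inferInstanceAs (PreservesColimitsOfShape J (prod.functor.obj B))
  preservesColimitsOfShape_of_reflects_of_preserves _ (forget B)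

end CategoryTheory.Over

theorem stmt5_general (κ : Cardinal.{u}) (hκ : κ.IsRegular) (B : Type u)
    (E : Type u) (f : E → B) :
    IsCardPresentable κ (Over.mk (X := B) (Y := E) (TypeCat.ofHom f)) ↔ IsCardPresentable κ E :=
  ⟨IsCardPresentable.of_preservesColimitsOfShape_imp hκ.aleph0_le fun _ _ _ _ =>
      (Over.forgetAdjStar B).preservesColimitsOfShape_coyoneda_obj_leftAdjoint_obj
        (Over.mk (TypeCat.ofHom f)),
    IsCardPresentable.of_preservesColimitsOfShape_imp hκ.aleph0_le fun _ _ _ _ =>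
      Over.preservesColimitsOfShape_coyoneda_mk (TypeCat.ofHom f)⟩

/-- For `κ`-presentable `B`, an object `f : E → B` of `Over B` is `κ`-presentable
if and only if `E` is a `κ`-presentable type: the source functor `Over B ⥤ Type`
preserves and detects `κ`-presentable objects. -/
theorem stmt5 (κ : Cardinal.{u}) (hκ : κ.IsRegular) (B : Type u)
    (hB : IsCardPresentable κ B) (E : Type u) (f : E → B) :
    IsCardPresentable κ (Over.mk (X := B) (Y := E) (TypeCat.ofHom f)) ↔ IsCardPresentable κ E :=
  stmt5_general κ hκ B E f
end

section
/- Let κ be an uncountable regular cardinal and let f : X → Y be a map of types such that X and Y are κ-presentable objects of Type. Then the pullback functor f^* : Over Y → Over X, sending (A → Y) to the pullback A ×_Y X → X, sends κ-presentable objects of Over Y to κ-presentable objects of Over X. -/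
/-!
For a regular cardinal `κ`, a type is `κ`-presentable iff it has fewer than `κ` elements, and an
object `W` of `Over B` is `κ`-presentable iff `W.left` is. Indeed `Over.forget B` preserves
`κ`-presentability, being left adjoint to `B × -`, which preserves colimits; conversely
`Hom(W, -)` is the pullback of `Hom(W.left, -.left) → Hom(W.left, B) ← *`, a finite limit of
`κ`-accessible functors. Since the total space of `T ×_Y X` embeds into `T.left × X`, the pullback
of a `κ`-small object along a map out of a `κ`-small type is `κ`-small.
-/

universe w v u u'

open CategoryTheory Limits Opposite

lemma hasCardinalLT_pullback {A B C : Type u} (f : A ⟶ C) (g : B ⟶ C) {κ : Cardinal.{w}}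
    (hκ : Cardinal.aleph0 ≤ κ) (hA : HasCardinalLT A κ) (hB : HasCardinalLT B κ) :
    HasCardinalLT (pullback f g) κ :=
  (hasCardinalLT_prod hκ hA hB).of_injective (fun p ↦ ((Types.pullbackIsoPullback f g).hom p).1)
    (Subtype.val_injective.comp (Types.pullbackIsoPullback f g).toEquiv.injective)

namespace CategoryTheory.Over

section

variable {C : Type u} [Category.{v} C] {B : C} (W : Over B)

def coyonedaLeft : coyoneda.obj (op W) ⟶ Over.forget B ⋙ coyoneda.obj (op W.left) where
  app _ := ↾fun u ↦ u.left

def postcompStructureHom :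
    Over.forget B ⋙ coyoneda.obj (op W.left) ⟶ (Functor.const _).obj (W.left ⟶ B) where
  app F := ↾fun g ↦ g ≫ F.hom

def constStructureHom :
    (Functor.const (Over B)).obj PUnit.{v + 1} ⟶ (Functor.const _).obj (W.left ⟶ B) where
  app _ := ↾fun _ ↦ W.hom

def coyonedaPullbackCone : PullbackCone (postcompStructureHom W) (constStructureHom W) :=
  PullbackCone.mk (coyonedaLeft W) { app _ := ↾fun _ ↦ PUnit.unit } (by ext F u; exact Over.w u)

def isLimitCoyonedaPullbackCone : IsLimit (coyonedaPullbackCone W) :=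
  PullbackCone.IsLimit.mk (W := coyoneda.obj (op W)) _
    (fun s ↦
      { app F := ↾fun x ↦
          Over.homMk (s.fst.app F x) (ConcreteCategory.congr_hom (congr_app s.condition F) x)
        naturality _ _ f := by
          ext x
          have := ConcreteCategory.congr_hom (s.fst.naturality f) x
          exact Over.OverMorphism.ext this })
    (fun _ ↦ rfl) (fun _ ↦ rfl)
    (fun s m hm _ ↦ by
      ext F x
      have := ConcreteCategory.congr_hom (congr_app hm F) x
      exact Over.OverMorphism.ext this)

lemma isCardinalPresentable_of_isCardinalPresentable_left (κ : Cardinal.{v}) [Fact κ.IsRegular]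
    [(Over.forget B).IsCardinalAccessible κ] [IsCardinalPresentable W.left κ] :
    IsCardinalPresentable W κ := by
  -- a constant functor factors through the constant endofunctor of `Type v`
  have (A : Type v) : ((Functor.const (Over B)).obj A).IsCardinalAccessible κ :=
    inferInstanceAs
      ((Over.forget B ⋙ coyoneda.obj (op W.left) ⋙ (Functor.const _).obj A).IsCardinalAccessible κ)
  have (k : WalkingCospan) :
      ((cospan (postcompStructureHom W) (constStructureHom W)).obj k).IsCardinalAccessible κ := by
    rcases k with (_ | _ | _) <;> dsimp <;> infer_instance
  exact Functor.isCardinalAccessible_of_isLimit _ (isLimitCoyonedaPullbackCone W) κ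
    (hasCardinalLT_of_finite _ _ (Cardinal.IsRegular.aleph0_le Fact.out))

end

variable {B : Type u}

instance preservesColimits_star : PreservesColimits (Over.star B) :=
  have : PreservesColimits (Over.star B ⋙ Over.forget B) :=
    inferInstanceAs (PreservesColimits (prod.functor.obj B))
  preservesColimits_of_reflects_of_preserves _ (Over.forget B)

lemma isCardinalPresentable_iff_hasCardinalLT_left (κ : Cardinal.{u}) [Fact κ.IsRegular]
    (W : Over B) : IsCardinalPresentable W κ ↔ HasCardinalLT W.left κ := by
  rw [← Types.isCardinalPresentable_iff]
  exact ⟨fun _ ↦ (Over.forgetAdjStar B).isCardinalPresentable_leftAdjoint_obj κ W,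
    fun _ ↦ isCardinalPresentable_of_isCardinalPresentable_left W κ⟩

end CategoryTheory.Over

theorem stmt12_general (κ : Cardinal.{u}) (hκ : κ.IsRegular)
    {X Y : Type u} (f : X ⟶ Y)
    (hX : IsCardPresentable κ X) :
    ∀ T : Over Y, IsCardPresentable κ T →
      IsCardPresentable κ ((Over.pullback f).obj T) := by
  have : Fact κ.IsRegular := ⟨hκ⟩
  intro T hT
  rw [isCardPresentable_iff_isCardinalPresentable, Types.isCardinalPresentable_iff] at hX
  rw [isCardPresentable_iff_isCardinalPresentable, Over.isCardinalPresentable_iff_hasCardinalLT_left]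
    at hT ⊢
  exact hasCardinalLT_pullback T.hom f hκ.aleph0_le hT hX

/-- For an uncountable regular cardinal `κ` and a map `f : X → Y` between
`κ`-presentable types, the pullback functor `Over Y ⥤ Over X` preserves
`κ`-presentable objects. -/
theorem stmt12 (κ : Cardinal.{u}) (hκ : κ.IsRegular) (hκ' : Cardinal.aleph0 < κ)
    {X Y : Type u} (f : X ⟶ Y)
    (hX : IsCardPresentable κ X) (hY : IsCardPresentable κ Y) :
    ∀ T : Over Y, IsCardPresentable κ T →
      IsCardPresentable κ ((Over.pullback f).obj T) :=
  stmt12_general κ hκ f hX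
end
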